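/- Suppose nr = (q^m−1)/s for positive integers m and s with m ≥ 2, and suppose {l_i : i ∈ Z_{n,r}} = {1, m}. If N_m ≥ 2 and either N_1 is even or r ≤ 2, then δ^{(1)}_{⌊N_1/2⌋+1} > δ^{(m)}_{⌊N_m/2⌋}. -/

import Mathlib

/-!
The cosets of size one in `Z_{n,r}` are the fixed points of `x ↦ q x` modulo `nr` that are
`≡ 1 (mod r)`. These form an arithmetic progression `t, t + D, …` with `t ≤ D` and `N₁ = nr / D`
terms, so `T := δ^{(1)}_{⌊N₁/2⌋+1} = t + ⌊N₁/2⌋ D`. For `c` fixed by `q` with `c ≡ 2 (mod r)`,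
the reflection `x ↦ c - x` modulo `nr` maps cosets in `Z_{n,r}` to cosets in `Z_{n,r}` of the same
size, and is an involution. Taking `c = 2t` when `N₁` is even and `c = 0` when `r ≤ 2`, it sends
every coset of size `m` whose leader exceeds `T` to one with leader below `T`. So at least half of
the `N_m` cosets of size `m` have leader below `T`, i.e. `δ^{(m)}_{⌊N_m/2⌋} < T`.
-/

open scoped Classical

/-- The `q`-cyclotomic coset of `i` modulo `N`, with representatives taken in `{1, …, N}`. -/
noncomputable def cosetOf (q N i : ℕ) : Finset ℕ :=
  (Finset.Icc 1 N).filter (fun x => ∃ j : ℕ, x ≡ i * q ^ j [MOD N])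

/-- `Z_{n,r} = {1 + i r : 0 ≤ i ≤ n-1}`. -/
def Zset (n r : ℕ) : Finset ℕ := (Finset.range n).image (fun i => 1 + i * r)

/-- The collection of `q`-cyclotomic cosets contained in `Z_{n,r}`. -/
noncomputable def cosetsIn (q n r : ℕ) : Finset (Finset ℕ) :=
  (Zset n r).image (fun i => cosetOf q (n * r) i)

/-- `N_l`: the number of `q`-cyclotomic cosets of size `l` contained in `Z_{n,r}`. -/
noncomputable def Ncount (q n r l : ℕ) : ℕ :=
  ((cosetsIn q n r).filter (fun C => C.card = l)).card

/-- Coset leader: the smallest element of a coset. -/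
noncomputable def leader (C : Finset ℕ) : ℕ := sInf (C : Set ℕ)

/-- The sorted (increasing) list of coset leaders of the cosets of size `l` in `Z_{n,r}`. -/
noncomputable def leaderList (q n r l : ℕ) : List ℕ :=
  Finset.sort (((cosetsIn q n r).filter (fun C => C.card = l)).image leader) (· ≤ ·)

/-- `δ_i^{(l)}`: the `i`-th smallest coset leader (1-indexed). -/
noncomputable def delta (q n r l i : ℕ) : ℕ := (leaderList q n r l).getD (i - 1) 0

open Finset
open scoped Nat

namespace Nat

theorem ModEq.eq_of_one_le_of_le {N a b : ℕ} (h : a ≡ b [MOD N]) (ha1 : 1 ≤ a) (ha : a ≤ N)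
    (hb1 : 1 ≤ b) (hb : b ≤ N) : a = b := by
  have h' : a - 1 ≡ b - 1 [MOD N] :=
    ModEq.add_right_cancel' 1 (by rwa [Nat.sub_add_cancel ha1, Nat.sub_add_cancel hb1])
  have := h'.eq_of_lt_of_lt (by omega) (by omega)
  omega

theorem ModEq.mul_pow_modEq_self {q N i : ℕ} (h : i * q ≡ i [MOD N]) (j : ℕ) :
    i * q ^ j ≡ i [MOD N] := by
  induction j with
  | zero => rw [pow_zero, mul_one]
  | succ j ih => rw [pow_succ, ← mul_assoc]; exact (ih.mul_right q).trans h

theorem mul_modEq_self_iff {q N x : ℕ} (hN : 0 < N) (hq : 1 ≤ q) :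
    x * q ≡ x [MOD N] ↔ N / N.gcd (q - 1) ∣ x := by
  rw [Nat.ModEq.comm, Nat.modEq_iff_dvd' (Nat.le_mul_of_pos_right x hq), ← Nat.mul_sub_one]
  have hg : 0 < N.gcd (q - 1) := Nat.gcd_pos_of_pos_left _ hN
  have hcop := Nat.coprime_div_gcd_div_gcd hg
  have hN' := (Nat.mul_div_cancel' (Nat.gcd_dvd_left N (q - 1))).symm
  have he := (Nat.mul_div_cancel' (Nat.gcd_dvd_right N (q - 1))).symm
  generalize N.gcd (q - 1) = g at *
  generalize N / g = N' at *
  generalize (q - 1) / g = e at *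
  rw [hN', he, mul_left_comm, Nat.mul_dvd_mul_iff_left hg, hcop.dvd_mul_right]

theorem modEq_and_dvd_iff_modEq_mul {F r a b x : ℕ} (hFr : F.Coprime r) (ha : a ≡ b [MOD r])
    (hFa : F ∣ a) : x ≡ b [MOD r] ∧ F ∣ x ↔ x ≡ a [MOD F * r] := by
  have haF : a ≡ 0 [MOD F] := Nat.modEq_zero_iff_dvd.2 hFa
  rw [← Nat.modEq_and_modEq_iff_modEq_mul hFr, and_comm]
  refine and_congr ⟨fun h => (Nat.modEq_zero_iff_dvd.2 h).trans haF.symm,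
    fun h => Nat.modEq_zero_iff_dvd.1 (h.trans haF)⟩ ⟨fun h => h.trans ha.symm, fun h => h.trans ha⟩

end Nat

namespace Finset

variable {α : Type*} [LinearOrder α]

theorem getD_sort_lt_of_lt_card_filter_lt {s : Finset α} {k : ℕ} {a T : α}
    (h : k < #(s.filter (· < T))) : (s.sort (· ≤ ·)).getD k a < T := by
  set L := s.sort (· ≤ ·)
  have hk : k < L.length := by
    rw [length_sort]; exact h.trans_le (card_le_card (filter_subset _ _))
  rw [List.getD_eq_getElem _ _ hk]
  by_contra! hT
  have hsub : s.filter (· < T) ⊆ (L.take k).toFinset := by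
    intro y hy
    rw [mem_filter] at hy
    obtain ⟨j, hj, rfl⟩ := List.getElem_of_mem ((mem_sort (· ≤ ·)).2 hy.1)
    have hjk : j < k := by
      by_contra! hkj
      exact (hy.2.trans_le hT).not_ge ((sortedLT_sort s).getElem_le_getElem_iff.2 hkj)
    rw [List.mem_toFinset, List.mem_take_iff_getElem]
    exact ⟨j, by omega, rfl⟩
  have := (card_le_card hsub).trans ((List.toFinset_card_le _).trans (List.length_take_le _ _))
  omega

theorem sort_eq_map_range_of_mem_iff_modEq {A : Finset ℕ} {D K t : ℕ} (hD : 0 < D)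
    (ht : 1 ≤ t) (htD : t ≤ D) (hA : ∀ x, x ∈ A ↔ 1 ≤ x ∧ x ≤ D * K ∧ x ≡ t [MOD D]) :
    A.sort (· ≤ ·) = (List.range K).map (fun i => t + i * D) := by
  have hsorted : ((List.range K).map (fun i => t + i * D)).SortedLT := by
    intro i j hij
    simp only [List.get_eq_getElem, List.getElem_map, List.getElem_range]
    have : (i : ℕ) < j := hij
    nlinarith
  refine (sortedLT_sort A).eq_of_mem_iff hsorted fun x => ?_
  simp only [mem_sort, hA, List.mem_map, List.mem_range]
  constructor
  · rintro ⟨hx1, hxN, hxt⟩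
    obtain ⟨k, hk⟩ := Nat.modEq_iff_dvd.1 hxt.symm
    have hk0 : 0 ≤ k := by
      by_contra! hk0
      have : (D : ℤ) * k ≤ -D := by nlinarith
      omega
    lift k to ℕ using hk0
    refine ⟨k, ?_, by linarith⟩
    by_contra! hKk
    have : (D : ℤ) * K ≤ D * k := by exact_mod_cast Nat.mul_le_mul_left D hKk
    omega
  · rintro ⟨i, hi, rfl⟩
    refine ⟨by omega, by nlinarith, ?_⟩
    simp [Nat.ModEq, Nat.add_mul_mod_self_right]

end Finset

/-- The representative of `v` modulo `N` in `{1, …, N}`. -/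
def repIcc (N v : ℕ) : ℕ := (v + N - 1) % N + 1

section RepIcc

variable {N : ℕ}

theorem one_le_repIcc (v : ℕ) : 1 ≤ repIcc N v := Nat.le_add_left 1 _

theorem repIcc_le (hN : 0 < N) (v : ℕ) : repIcc N v ≤ N := Nat.mod_lt _ hN

theorem repIcc_modEq (hN : 0 < N) (v : ℕ) : repIcc N v ≡ v [MOD N] := by
  have h := (Nat.mod_modEq (v + N - 1) N).add_right 1
  rw [Nat.sub_add_cancel (by omega)] at h
  exact h.trans (Nat.add_modEq_right)

theorem repIcc_eq_self {v : ℕ} (h1 : 1 ≤ v) (h2 : v ≤ N) : repIcc N v = v :=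
  (repIcc_modEq (by omega) v).eq_of_one_le_of_le (one_le_repIcc v) (repIcc_le (by omega) v) h1 h2

end RepIcc

/-- The reflection `x ↦ c - x` modulo `N`, on representatives in `{1, …, N}`. -/
def reflect (c N x : ℕ) : ℕ := repIcc N (c + N - x)

section Reflect

variable {c N : ℕ}

theorem cast_reflect (hN : 0 < N) {x : ℕ} (hx : x ≤ N) :
    (reflect c N x : ZMod N) = c - x := by
  rw [reflect, (ZMod.natCast_eq_natCast_iff _ _ _).2 (repIcc_modEq hN _),
    Nat.cast_sub (by omega), Nat.cast_add, ZMod.natCast_self, add_zero]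

theorem reflect_add_modEq (hN : 0 < N) {x : ℕ} (hx : x ≤ N) : reflect c N x + x ≡ c [MOD N] := by
  rw [← ZMod.natCast_eq_natCast_iff, Nat.cast_add, cast_reflect hN hx, sub_add_cancel]

theorem one_le_reflect (x : ℕ) : 1 ≤ reflect c N x := one_le_repIcc _

theorem reflect_le (hN : 0 < N) (x : ℕ) : reflect c N x ≤ N := repIcc_le hN _

theorem reflect_reflect (hN : 0 < N) {x : ℕ} (hx1 : 1 ≤ x) (hx : x ≤ N) :
    reflect c N (reflect c N x) = x := by
  refine Nat.ModEq.eq_of_one_le_of_le ?_ (one_le_reflect _) (reflect_le hN _) hx1 hx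
  rw [← ZMod.natCast_eq_natCast_iff, cast_reflect hN (reflect_le hN _), cast_reflect hN hx]
  ring

theorem reflect_eq_sub {x : ℕ} (hcx : c < x) (hxN : x < N + c) : reflect c N x = c + N - x :=
  repIcc_eq_self (by omega) (by omega)

theorem reflect_lt {x T : ℕ} (hcT : c ≤ T) (hcN : c + N ≤ 2 * T) (hTx : T < x)
    (hxN : x < N + c) : reflect c N x < T := by
  rw [reflect_eq_sub (by omega) hxN]
  omega

end Reflect

section Cosets

variable {q N : ℕ}

theorem mem_cosetOf {i x : ℕ} :
    x ∈ cosetOf q N i ↔ (1 ≤ x ∧ x ≤ N) ∧ ∃ j, x ≡ i * q ^ j [MOD N] := by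
  simp [cosetOf]

theorem self_mem_cosetOf {i : ℕ} (h1 : 1 ≤ i) (h2 : i ≤ N) : i ∈ cosetOf q N i :=
  mem_cosetOf.2 ⟨⟨h1, h2⟩, 0, by rw [pow_zero, mul_one]⟩

theorem cosetOf_subset_Icc (i : ℕ) : cosetOf q N i ⊆ Icc 1 N :=
  filter_subset _ _

theorem cosetOf_eq_of_mem (hq : q.Coprime N) (hN : 0 < N) {i x : ℕ}
    (hx : x ∈ cosetOf q N i) : cosetOf q N x = cosetOf q N i := by
  obtain ⟨-, j, hj⟩ := mem_cosetOf.1 hx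
  -- `q` is invertible modulo `N`, with inverse `q ^ (φ N - 1)`
  have hi : i ≡ x * q ^ (j * (φ N - 1)) [MOD N] := by
    have hφ : j * φ N = j + j * (φ N - 1) := by
      have := Nat.totient_pos.2 hN
      rw [add_comm, ← Nat.mul_add_one, Nat.sub_add_cancel this]
    calc i = i * 1 ^ j := by ring
      _ ≡ i * (q ^ φ N) ^ j [MOD N] := ((Nat.ModEq.pow_totient hq).symm.pow j).mul_left i
      _ = i * q ^ j * q ^ (j * (φ N - 1)) := by rw [← pow_mul, mul_comm _ j, hφ, pow_add, mul_assoc]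
      _ ≡ x * q ^ (j * (φ N - 1)) [MOD N] := hj.symm.mul_right _
  ext y
  simp only [mem_cosetOf]
  refine and_congr_right fun _ =>
    ⟨fun ⟨k, hk⟩ => ⟨j + k, ?_⟩, fun ⟨k, hk⟩ => ⟨j * (φ N - 1) + k, ?_⟩⟩
  · rw [pow_add, ← mul_assoc]; exact hk.trans (hj.mul_right _)
  · rw [pow_add, ← mul_assoc]; exact hk.trans (hi.mul_right _)

theorem cosetOf_eq_singleton_iff {i : ℕ} (h1 : 1 ≤ i) (h2 : i ≤ N) :
    cosetOf q N i = {i} ↔ i * q ≡ i [MOD N] := by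
  rw [eq_singleton_iff_unique_mem]
  refine ⟨fun ⟨_, h⟩ => ?_, fun h => ⟨self_mem_cosetOf h1 h2, fun x hx => ?_⟩⟩
  · have hN : 0 < N := by omega
    have hrep : repIcc N (i * q) ∈ cosetOf q N i :=
      mem_cosetOf.2 ⟨⟨one_le_repIcc _, repIcc_le hN _⟩, 1, by rw [pow_one]; exact repIcc_modEq hN _⟩
    calc i * q ≡ repIcc N (i * q) [MOD N] := (repIcc_modEq hN _).symm
      _ = i := h _ hrep
  · obtain ⟨⟨hx1, hx2⟩, j, hj⟩ := mem_cosetOf.1 hx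
    exact (hj.trans (h.mul_pow_modEq_self j)).eq_of_one_le_of_le hx1 hx2 h1 h2

theorem card_cosetOf_eq_one_iff {i : ℕ} (h1 : 1 ≤ i) (h2 : i ≤ N) :
    #(cosetOf q N i) = 1 ↔ i * q ≡ i [MOD N] := by
  rw [← cosetOf_eq_singleton_iff h1 h2, card_eq_one]
  refine ⟨fun ⟨a, ha⟩ => ?_, fun h => ⟨i, h⟩⟩
  have hia : i = a := mem_singleton.1 (ha ▸ self_mem_cosetOf h1 h2)
  rwa [← hia] at ha

variable {c : ℕ}

theorem reflect_mem_cosetOf (hN : 0 < N) (hcq : c * q ≡ c [MOD N]) {i x : ℕ} (hi : i ≤ N)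
    (hx : x ∈ cosetOf q N i) : reflect c N x ∈ cosetOf q N (reflect c N i) := by
  obtain ⟨⟨-, hxN⟩, j, hj⟩ := mem_cosetOf.1 hx
  refine mem_cosetOf.2 ⟨⟨one_le_reflect _, reflect_le hN _⟩, j, ?_⟩
  rw [← ZMod.natCast_eq_natCast_iff] at hj ⊢
  have hc := (ZMod.natCast_eq_natCast_iff _ _ _).2 (hcq.mul_pow_modEq_self j)
  push_cast at hj hc ⊢
  rw [cast_reflect hN hxN, cast_reflect hN hi, hj]
  linear_combination -hc

theorem image_reflect_cosetOf (hN : 0 < N) (hcq : c * q ≡ c [MOD N]) {i : ℕ} (hi1 : 1 ≤ i)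
    (hi2 : i ≤ N) : (cosetOf q N i).image (reflect c N) = cosetOf q N (reflect c N i) := by
  ext y
  rw [mem_image]
  refine ⟨fun ⟨x, hx, hxy⟩ => hxy ▸ reflect_mem_cosetOf hN hcq hi2 hx, fun hy => ?_⟩
  obtain ⟨⟨hy1, hy2⟩, -⟩ := mem_cosetOf.1 hy
  refine ⟨reflect c N y, ?_, reflect_reflect hN hy1 hy2⟩
  simpa only [reflect_reflect hN hi1 hi2] using reflect_mem_cosetOf hN hcq (reflect_le hN _) hy

end Cosets

theorem leader_mem {C : Finset ℕ} (hC : C.Nonempty) : leader C ∈ C :=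
  mem_coe.1 (Nat.sInf_mem (coe_nonempty.2 hC))

theorem leader_le {C : Finset ℕ} {x : ℕ} (hx : x ∈ C) : leader C ≤ x :=
  Nat.sInf_le (mem_coe.2 hx)

theorem leader_singleton (x : ℕ) : leader {x} = x := by
  simp [leader]

section CosetsIn

variable {q n r : ℕ}

theorem mem_Zset (hr : 0 < r) {x : ℕ} :
    x ∈ Zset n r ↔ (1 ≤ x ∧ x ≤ n * r) ∧ x ≡ 1 [MOD r] := by
  simp only [Zset, mem_image, mem_range]
  constructor
  · rintro ⟨i, hi, rfl⟩
    refine ⟨⟨by omega, ?_⟩, ?_⟩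
    · nlinarith
    · simp [Nat.ModEq, Nat.add_mul_mod_self_right]
  · rintro ⟨⟨hx1, hxN⟩, hx⟩
    obtain ⟨i, hi⟩ := (Nat.modEq_iff_dvd' hx1).1 hx.symm
    refine ⟨i, ?_, by rw [mul_comm, ← hi]; omega⟩
    by_contra! hni
    have := Nat.mul_le_mul_left r hni
    rw [mul_comm n r] at hxN
    omega

theorem reflect_mem_Zset (hr : 0 < r) {c x : ℕ} (hcr : c ≡ 2 [MOD r]) (hx : x ∈ Zset n r) :
    reflect c (n * r) x ∈ Zset n r := by
  obtain ⟨⟨hx1, hxN⟩, hx⟩ := (mem_Zset hr).1 hx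
  have hN : 0 < n * r := by omega
  refine (mem_Zset hr).2 ⟨⟨one_le_reflect _, reflect_le hN _⟩, Nat.ModEq.add_right_cancel' x ?_⟩
  calc reflect c (n * r) x + x ≡ c [MOD r] :=
        (reflect_add_modEq hN hxN).of_dvd (dvd_mul_left r n)
    _ ≡ 1 + 1 [MOD r] := hcr
    _ ≡ 1 + x [MOD r] := hx.symm.add_left 1

theorem mem_cosetsIn {C : Finset ℕ} :
    C ∈ cosetsIn q n r ↔ ∃ i ∈ Zset n r, cosetOf q (n * r) i = C :=
  mem_image

theorem subset_Icc_of_mem_cosetsIn {C : Finset ℕ} (hC : C ∈ cosetsIn q n r) :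
    C ⊆ Icc 1 (n * r) := by
  obtain ⟨i, -, rfl⟩ := mem_cosetsIn.1 hC
  exact cosetOf_subset_Icc i

theorem nonempty_of_mem_cosetsIn (hr : 0 < r) {C : Finset ℕ} (hC : C ∈ cosetsIn q n r) :
    C.Nonempty := by
  obtain ⟨i, hi, rfl⟩ := mem_cosetsIn.1 hC
  obtain ⟨⟨hi1, hi2⟩, -⟩ := (mem_Zset hr).1 hi
  exact ⟨i, self_mem_cosetOf hi1 hi2⟩

theorem cosetOf_leader (hq : q.Coprime (n * r)) (hr : 0 < r) {C : Finset ℕ}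
    (hC : C ∈ cosetsIn q n r) : cosetOf q (n * r) (leader C) = C := by
  obtain ⟨i, hi, rfl⟩ := mem_cosetsIn.1 hC
  obtain ⟨⟨hi1, hi2⟩, -⟩ := (mem_Zset hr).1 hi
  exact cosetOf_eq_of_mem hq (by omega) (leader_mem (nonempty_of_mem_cosetsIn hr hC))

theorem leader_injOn_cosetsIn (hq : q.Coprime (n * r)) (hr : 0 < r) :
    Set.InjOn leader (cosetsIn q n r) := fun C hC C' hC' h => by
  rw [← cosetOf_leader hq hr hC, ← cosetOf_leader hq hr hC', h]

end CosetsIn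

section LeaderSet

variable {q n r : ℕ}

noncomputable def leaderSet (q n r l : ℕ) : Finset ℕ :=
  ((cosetsIn q n r).filter (fun C => C.card = l)).image leader

theorem leaderList_eq_sort (l : ℕ) : leaderList q n r l = (leaderSet q n r l).sort (· ≤ ·) :=
  rfl

theorem Ncount_eq_card_leaderSet (hq : q.Coprime (n * r)) (hr : 0 < r) (l : ℕ) :
    Ncount q n r l = #(leaderSet q n r l) :=
  (card_image_of_injOn ((leader_injOn_cosetsIn hq hr).mono (filter_subset _ _))).symm

theorem mem_leaderSet_one (hr : 0 < r) {x : ℕ} :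
    x ∈ leaderSet q n r 1 ↔ x ∈ Zset n r ∧ x * q ≡ x [MOD n * r] := by
  simp only [leaderSet, mem_image, mem_filter, mem_cosetsIn]
  constructor
  · rintro ⟨C, ⟨⟨i, hi, rfl⟩, hC⟩, rfl⟩
    obtain ⟨⟨hi1, hi2⟩, -⟩ := (mem_Zset hr).1 hi
    have hfix := (card_cosetOf_eq_one_iff hi1 hi2).1 hC
    rw [(cosetOf_eq_singleton_iff hi1 hi2).2 hfix, leader_singleton]
    exact ⟨hi, hfix⟩
  · rintro ⟨hx, hfix⟩
    obtain ⟨⟨hx1, hx2⟩, -⟩ := (mem_Zset hr).1 hx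
    refine ⟨_, ⟨⟨x, hx, rfl⟩, (card_cosetOf_eq_one_iff hx1 hx2).2 hfix⟩, ?_⟩
    rw [(cosetOf_eq_singleton_iff hx1 hx2).2 hfix, leader_singleton]

end LeaderSet

section Reflection

variable {q n r c : ℕ}

theorem image_reflect_mem_cosetsIn (hr : 0 < r) (hcq : c * q ≡ c [MOD n * r])
    (hcr : c ≡ 2 [MOD r]) {C : Finset ℕ} (hC : C ∈ cosetsIn q n r) :
    C.image (reflect c (n * r)) ∈ cosetsIn q n r := by
  obtain ⟨i, hi, rfl⟩ := mem_cosetsIn.1 hC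
  obtain ⟨⟨hi1, hi2⟩, -⟩ := (mem_Zset hr).1 hi
  exact mem_cosetsIn.2 ⟨_, reflect_mem_Zset hr hcr hi,
    (image_reflect_cosetOf (by omega) hcq hi1 hi2).symm⟩

theorem card_image_reflect {N : ℕ} (hN : 0 < N) {C : Finset ℕ} (hC : C ⊆ Icc 1 N) :
    #(C.image (reflect c N)) = #C := by
  refine card_image_of_injOn fun x hx y hy hxy => ?_
  obtain ⟨hx1, hx2⟩ := mem_Icc.1 (hC hx)
  obtain ⟨hy1, hy2⟩ := mem_Icc.1 (hC hy)
  rw [← reflect_reflect hN hx1 hx2, hxy, reflect_reflect hN hy1 hy2]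

theorem image_reflect_image_reflect {N : ℕ} (hN : 0 < N) {C : Finset ℕ} (hC : C ⊆ Icc 1 N) :
    (C.image (reflect c N)).image (reflect c N) = C := by
  rw [image_image]
  conv_rhs => rw [← image_id (s := C)]
  refine image_congr fun x hx => ?_
  obtain ⟨hx1, hx2⟩ := mem_Icc.1 (hC hx)
  exact reflect_reflect hN hx1 hx2

theorem leader_image_reflect_lt (hq : q.Coprime (n * r)) (hr : 0 < r) {T : ℕ}
    (hTq : T * q ≡ T [MOD n * r]) (hcT : c ≤ T) (hcN : c + n * r ≤ 2 * T)
    {C : Finset ℕ} (hC : C ∈ cosetsIn q n r) (hC1 : #C ≠ 1) (hTC : T ≤ leader C) :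
    leader (C.image (reflect c (n * r))) < T := by
  have hxC := leader_mem (nonempty_of_mem_cosetsIn hr hC)
  obtain ⟨hx1, hxN⟩ := mem_Icc.1 (subset_Icc_of_mem_cosetsIn hC hxC)
  have hfix : ¬ leader C * q ≡ leader C [MOD n * r] := fun h =>
    hC1 (by rwa [← cosetOf_leader hq hr hC, card_cosetOf_eq_one_iff hx1 hxN])
  have hTx : T < leader C := lt_of_le_of_ne hTC fun h => hfix (h ▸ hTq)
  have hxN' : leader C < n * r := lt_of_le_of_ne hxN fun h => hfix <| h ▸
    (Nat.modEq_zero_iff_dvd.2 (dvd_mul_right _ q)).trans (Nat.modEq_zero_iff_dvd.2 dvd_rfl).symm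
  calc leader (C.image (reflect c (n * r))) ≤ reflect c (n * r) (leader C) :=
        leader_le (mem_image_of_mem _ hxC)
    _ < T := reflect_lt hcT hcN hTx (by omega)

end Reflection

section Count

variable {q n r c : ℕ}

theorem Ncount_le_two_mul_card_filter_leaderSet_lt (hq : q.Coprime (n * r)) (hn : 0 < n)
    (hr : 0 < r) {m T : ℕ} (hm : m ≠ 1) (hTq : T * q ≡ T [MOD n * r])
    (hcq : c * q ≡ c [MOD n * r]) (hcr : c ≡ 2 [MOD r]) (hcT : c ≤ T)
    (hcN : c + n * r ≤ 2 * T) :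
    Ncount q n r m ≤ 2 * #((leaderSet q n r m).filter (· < T)) := by
  have hN : 0 < n * r := by positivity
  set S := (cosetsIn q n r).filter (fun C => C.card = m)
  have hgood : #((leaderSet q n r m).filter (· < T)) = #(S.filter (leader · < T)) := by
    rw [leaderSet, filter_image, card_image_of_injOn]
    exact (leader_injOn_cosetsIn hq hr).mono fun C hC => (mem_filter.1 (mem_filter.1 hC).1).1
  have hbad : #(S.filter (¬ leader · < T)) ≤ #(S.filter (leader · < T)) := by
    refine card_le_card_of_injOn (·.image (reflect c (n * r))) (fun C hC => ?_)
      (fun C hC C' hC' h => ?_)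
    · obtain ⟨hCS, hTC⟩ := mem_filter.1 (mem_coe.1 hC)
      obtain ⟨hCin, hCm⟩ := mem_filter.1 hCS
      refine mem_filter.2 ⟨mem_filter.2 ⟨image_reflect_mem_cosetsIn hr hcq hcr hCin, ?_⟩,
        leader_image_reflect_lt hq hr hTq hcT hcN hCin (by omega) (not_lt.1 hTC)⟩
      rw [card_image_reflect hN (subset_Icc_of_mem_cosetsIn hCin), hCm]
    · have hCin := (mem_filter.1 (mem_filter.1 hC).1).1
      have hC'in := (mem_filter.1 (mem_filter.1 hC').1).1
      rw [← image_reflect_image_reflect hN (subset_Icc_of_mem_cosetsIn hCin),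
        ← image_reflect_image_reflect hN (subset_Icc_of_mem_cosetsIn hC'in)]
      exact congrArg _ h
  rw [hgood, Ncount, ← card_filter_add_card_filter_not (s := S) (fun C => leader C < T)]
  omega

end Count

section SizeOne

variable {q n r : ℕ}

theorem exists_sort_leaderSet_one_eq_map_range (hq : 1 ≤ q) (hn : 0 < n) (hr : 0 < r)
    (hne : (leaderSet q n r 1).Nonempty) :
    ∃ t D K, n * r = D * K ∧ t ≤ D ∧ D ≤ r * t ∧
      (leaderSet q n r 1).sort (· ≤ ·) = (List.range K).map (fun i => t + i * D) := by
  have hN : 0 < n * r := by positivity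
  set F := n * r / (n * r).gcd (q - 1)
  have hmem : ∀ x, x ∈ leaderSet q n r 1 ↔ (1 ≤ x ∧ x ≤ n * r) ∧ x ≡ 1 [MOD r] ∧ F ∣ x := by
    intro x
    rw [mem_leaderSet_one hr, mem_Zset hr, Nat.mul_modEq_self_iff hN hq, and_assoc]
  obtain ⟨a, ha⟩ := hne
  obtain ⟨-, ha1, hFa⟩ := (hmem a).1 ha
  have hFr : F.Coprime r :=
    Nat.Coprime.coprime_dvd_left hFa (by rw [Nat.Coprime, ha1.gcd_eq, Nat.gcd_one_left])
  have hF : 0 < F := Nat.div_pos (Nat.gcd_le_left _ hN) (Nat.gcd_pos_of_pos_left _ hN)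
  have hD : 0 < F * r := by positivity
  obtain ⟨K, hK⟩ :=
    hFr.mul_dvd_of_dvd_of_dvd (Nat.div_dvd_of_dvd (Nat.gcd_dvd_left _ _)) (dvd_mul_left r n)
  set t := repIcc (F * r) a
  have hta : t ≡ a [MOD F * r] := repIcc_modEq hD a
  have hFt : F ∣ t := ((hta.of_dvd (dvd_mul_right F r)).dvd_iff dvd_rfl).2 hFa
  refine ⟨t, F * r, K, hK, repIcc_le hD _, ?_,
    sort_eq_map_range_of_mem_iff_modEq hD (one_le_repIcc _) (repIcc_le hD _) fun x => ?_⟩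
  · rw [mul_comm r]
    exact Nat.mul_le_mul_right r (Nat.le_of_dvd (one_le_repIcc _) hFt)
  · rw [← hK, hmem, and_assoc, Nat.modEq_and_dvd_iff_modEq_mul hFr ha1 hFa]
    exact and_congr_right fun _ => and_congr_right fun _ =>
      ⟨fun h => h.trans hta.symm, fun h => h.trans hta⟩

end SizeOne

theorem exists_reflection_center {q n r t D K : ℕ} (hr : 0 < r)
    (ht : t ∈ leaderSet q n r 1) (hK : n * r = D * K) (hK0 : 0 < K) (htD : t ≤ D)
    (hDt : D ≤ r * t) (hcond : Even K ∨ r ≤ 2) :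
    ∃ c, c * q ≡ c [MOD n * r] ∧ c ≡ 2 [MOD r] ∧ c ≤ t + K / 2 * D ∧
      c + n * r ≤ 2 * (t + K / 2 * D) := by
  obtain ⟨⟨-, htr⟩, htq⟩ := (mem_leaderSet_one hr).1 ht |>.imp_left (mem_Zset hr).1
  rcases hcond with heven | hr2
  · obtain ⟨k, rfl⟩ := heven
    rw [show (k + k) / 2 = k by omega]
    refine ⟨2 * t, by rw [mul_assoc]; exact htq.mul_left 2, htr.mul_left 2, ?_,
      by rw [hK]; linarith⟩
    have : D ≤ k * D := Nat.le_mul_of_pos_left D (by omega)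
    omega
  · refine ⟨0, by rw [zero_mul], ?_, Nat.zero_le _, ?_⟩
    · exact (Nat.modEq_zero_iff_dvd.2 (by interval_cases r <;> norm_num)).symm
    · have : K ≤ 2 * (K / 2) + 1 := by omega
      have := Nat.mul_le_mul_right D this
      rw [hK]
      nlinarith

theorem stmt9_general (q n r m : ℕ) (hq : IsPrimePow q) (hn : 0 < n) (hco : Nat.Coprime n q)
    (hr : 0 < r) (hrdvd : r ∣ q - 1) (hm : 2 ≤ m)
    (hset : (Zset n r).image (fun i => (cosetOf q (n * r) i).card) = {1, m})
    (hNm : 2 ≤ Ncount q n r m)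
    (hcond : Even (Ncount q n r 1) ∨ r ≤ 2) :
    delta q n r m (Ncount q n r m / 2) < delta q n r 1 (Ncount q n r 1 / 2 + 1) := by
  have hq1 : 1 ≤ q := hq.one_lt.le
  have hqN : q.Coprime (n * r) := hco.symm.mul_right
    (((Nat.coprime_self_sub_right hq1).2 q.coprime_one_right).coprime_dvd_right hrdvd)
  have hne : (leaderSet q n r 1).Nonempty := by
    obtain ⟨i, hi, hi1⟩ := mem_image.1 (hset ▸ mem_insert_self 1 {m})
    obtain ⟨⟨h1, h2⟩, -⟩ := (mem_Zset hr).1 hi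
    exact ⟨i, (mem_leaderSet_one hr).2 ⟨hi, (card_cosetOf_eq_one_iff h1 h2).1 hi1⟩⟩
  obtain ⟨t, D, K, hK, htD, hDt, hsort⟩ := exists_sort_leaderSet_one_eq_map_range hq1 hn hr hne
  have hN1 : Ncount q n r 1 = K := by
    rw [Ncount_eq_card_leaderSet hqN hr, ← length_sort (· ≤ ·), hsort, List.length_map,
      List.length_range]
  have hK0 : 0 < K := Nat.pos_of_ne_zero fun h => by simp [h] at hK; omega
  have hmem : ∀ i < K, t + i * D ∈ leaderSet q n r 1 := fun i hi =>
    (mem_sort (· ≤ ·)).1 (hsort ▸ List.mem_map_of_mem (List.mem_range.2 hi))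
  have hT : delta q n r 1 (Ncount q n r 1 / 2 + 1) = t + K / 2 * D := by
    simp [delta, leaderList_eq_sort, hsort, hN1, List.getD_eq_getElem?_getD,
      show K / 2 < K by omega]
  obtain ⟨c, hcq, hcr, hcT, hcN⟩ := exists_reflection_center hr
    (by simpa using hmem 0 hK0) hK hK0 htD hDt (hN1 ▸ hcond)
  have hcount := Ncount_le_two_mul_card_filter_leaderSet_lt hqN hn hr (show m ≠ 1 by omega)
    ((mem_leaderSet_one hr).1 (hmem _ (show K / 2 < K by omega))).2 hcq hcr hcT hcN
  rw [hT, delta, leaderList_eq_sort]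
  exact getD_sort_lt_of_lt_card_filter_lt (by omega)

theorem stmt9 (q n r m s : ℕ) (hq : IsPrimePow q) (hn : 0 < n) (hco : Nat.Coprime n q)
    (hr : 0 < r) (hrdvd : r ∣ q - 1) (hm : 2 ≤ m) (hs : 0 < s)
    (hnrs : n * r * s = q ^ m - 1)
    (hset : (Zset n r).image (fun i => (cosetOf q (n * r) i).card) = {1, m})
    (hNm : 2 ≤ Ncount q n r m)
    (hcond : Even (Ncount q n r 1) ∨ r ≤ 2) :
    delta q n r m (Ncount q n r m / 2) < delta q n r 1 (Ncount q n r 1 / 2 + 1) :=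
  stmt9_general q n r m hq hn hco hr hrdvd hm hset hNm hcond
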